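/- Let C, F be as in the localic Galois setup. In the site defining lAut(F), given generators [(X,⟨x₀|x₁⟩)] and [(Y,⟨y₀|y₁⟩)], if some cover {[A_α] → [(X,⟨x₀|x₁⟩)]} satisfies [A_α] ≤ [(Y,⟨y₀|y₁⟩)] for all α, then already [(X,⟨x₀|x₁⟩)] ≤ [(Y,⟨y₀|y₁⟩)] in D_{ΔF}; equivalently, the map from D_{ΔF} to lAut(F) given by sheafification is full. Consequently (Lifting Lemma): for x ∈ F X and y ∈ F Y, if lFix(x) ≤ lFix(y) in lAut(F) then there is a unique arrow f : X → Y in C with F(f)(x) = y. -/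

import Mathlib

open CategoryTheory

universe v u

open scoped Classical

/-- Grothendieck strict epimorphism. -/
def IsStrictEpi {C : Type u} [Category.{v} C] {X Y : C} (f : X ⟶ Y) : Prop :=
  ∀ {Z : C} (g : X ⟶ Z),
    (∀ {W : C} (s t : W ⟶ X), s ≫ f = t ≫ f → s ≫ g = t ≫ g) →
    ∃! h : Y ⟶ Z, f ≫ h = g

variable {C : Type u} [Category.{v} C]

/-- The order of the poset `D_{ΔF}` of pairs `(X, (x₀, x₁))`, `x₀ x₁ ∈ F X`. -/
def dle (F : C ⥤ Type v) (a b : Σ X : C, F.obj X × F.obj X) : Prop :=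
  ∃ f : a.1 ⟶ b.1, F.map f a.2.1 = b.2.1 ∧ F.map f a.2.2 = b.2.2

/-- The order of the meet-semilattice `D(D_{ΔF})` of finite subsets of `D_{ΔF}`:
`[A] ≤ [B]` iff each generator of `B` is above some generator of `A`. -/
def lle (F : C ⥤ Type v) (A B : Finset (Σ X : C, F.obj X × F.obj X)) : Prop :=
  ∀ b ∈ B, ∃ a ∈ A, dle F a b

/-- The covers of the pretopology on the site `D(D_{ΔF})` generated by the Wraith
covers forcing a natural relation to be a bijection: isomorphism covers, pullbacks
(meet = union of finite subsets), and composition. -/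
inductive GCov (F : C ⥤ Type v) :
    Finset (Σ X : C, F.obj X × F.obj X) → Set (Finset (Σ X : C, F.obj X × F.obj X)) → Prop
  | empty_left (X : C) (x y z : F.obj X) (h : x ≠ y) :
      GCov F {⟨X, (x, z)⟩, ⟨X, (y, z)⟩} ∅
  | empty_right (X : C) (x y z : F.obj X) (h : x ≠ y) :
      GCov F {⟨X, (z, x)⟩, ⟨X, (z, y)⟩} ∅
  | total_left (X : C) (z : F.obj X) :
      GCov F ∅ {S | ∃ x : F.obj X, S = {⟨X, (x, z)⟩}}
  | total_right (X : C) (z : F.obj X) :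
      GCov F ∅ {S | ∃ x : F.obj X, S = {⟨X, (z, x)⟩}}
  | iso (u v : Finset (Σ X : C, F.obj X × F.obj X)) (h₁ : lle F u v) (h₂ : lle F v u) :
      GCov F u {v}
  | pull (u : Finset (Σ X : C, F.obj X × F.obj X))
      (S : Set (Finset (Σ X : C, F.obj X × F.obj X))) (h : GCov F u S)
      (w : Finset (Σ X : C, F.obj X × F.obj X)) (hw : lle F w u) :
      GCov F w {t | ∃ s ∈ S, t = s ∪ w}
  | trans (u : Finset (Σ X : C, F.obj X × F.obj X))
      (S : Set (Finset (Σ X : C, F.obj X × F.obj X))) (h : GCov F u S)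
      (T : Finset (Σ X : C, F.obj X × F.obj X) → Set (Finset (Σ X : C, F.obj X × F.obj X)))
      (hT : ∀ s ∈ S, GCov F s (T s)) :
      GCov F u {t | ∃ s ∈ S, t ∈ T s}


/-!
Every generating cover of the site is effective for the principal down-sets `↓b` of `D_{ΔF}`:
if `c` lies below the base of a cover and every common lower bound of `c` and a member of the
cover lies below `b`, then `c ≤ b`. This is checked generator by generator and is preserved by
pullback and composition. The empty covers are harmless because the category of elements `∫F`
is a poset, so two arrows `c ⟶ (X, x, z)`, `c ⟶ (X, y, z)` coincide and force `x = y`.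
For the total cover of `(X, –, z)` and `c = (Z, z₀, z₁)`, choose `(M, m)` in `∫F` over both
`(Z, z₁)` and `(X, z)`, via `f : M ⟶ Z`. Each `w` in the fibre of `F f` over `z₀` gives a lower
bound `(M, w, m)` of `c` and of a member of the cover, hence an arrow `M ⟶ b` which, by thinness,
does not depend on `w`. That arrow is constant on the fibre; since every `F (s ≫ f)` is
surjective, it therefore equalises every pair `s, t` with `s ≫ f = t ≫ f`, and so descends along
the strict epimorphism `f` to the required `Z ⟶ b`.
-/

lemma IsStrictEpi.epi {C : Type u} [Category.{v} C] {X Y : C} {f : X ⟶ Y}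
    (hf : IsStrictEpi f) : Epi f :=
  ⟨fun g₁ g₂ h => (hf (f ≫ g₁) fun s t hst => by rw [reassoc_of% hst]).unique rfl h.symm⟩

lemma IsStrictEpi.surjective {A B : Type v} {f : A ⟶ B} (hf : IsStrictEpi f) :
    Function.Surjective f :=
  (epi_iff_surjective f).1 hf.epi

section Galois

variable (F : C ⥤ Type v)

lemma dle_refl (a : Σ X : C, F.obj X × F.obj X) : dle F a a :=
  ⟨𝟙 a.1, F.map_id_apply a.1 a.2.1, F.map_id_apply a.1 a.2.2⟩

lemma dle_trans {a b c : Σ X : C, F.obj X × F.obj X} (hab : dle F a b) (hbc : dle F b c) :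
    dle F a c := by
  obtain ⟨f, hf₀, hf₁⟩ := hab
  obtain ⟨g, hg₀, hg₁⟩ := hbc
  exact ⟨f ≫ g, by rw [F.map_comp_apply, hf₀, hg₀], by rw [F.map_comp_apply, hf₁, hg₁]⟩

lemma dle_swap_iff {a b : Σ X : C, F.obj X × F.obj X} :
    dle F ⟨a.1, a.2.swap⟩ ⟨b.1, b.2.swap⟩ ↔ dle F a b :=
  ⟨fun ⟨f, h₀, h₁⟩ => ⟨f, h₁, h₀⟩, fun ⟨f, h₀, h₁⟩ => ⟨f, h₁, h₀⟩⟩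

lemma hom_ext_of_map_eq [Quiver.IsThin F.Elements] {X Y : C} {p q : X ⟶ Y} (x : F.obj X)
    (h : F.map p x = F.map q x) : p = q :=
  congrArg Subtype.val (Subsingleton.elim (α := F.elementsMk X x ⟶ F.elementsMk Y (F.map p x))
    ⟨p, rfl⟩ ⟨q, h.symm⟩)

lemma map_surjective_of_isStrictEpi (h1 : ∀ {X Y : C} (f : X ⟶ Y), IsStrictEpi f)
    (h3 : ∀ {X Y : C} (f : X ⟶ Y), IsStrictEpi f →
      IsStrictEpi (C := Type v) (X := F.obj X) (Y := F.obj Y) (F.map f))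
    {X Y : C} (f : X ⟶ Y) : Function.Surjective (F.map f) :=
  IsStrictEpi.surjective (h3 f (h1 f))

variable {F}

lemma exists_comp_eq_of_map_eq_on_fiber [Quiver.IsThin F.Elements]
    (hsurj : ∀ {X Y : C} (f : X ⟶ Y), Function.Surjective (F.map f))
    {M Z B : C} {f : M ⟶ Z} (hf : IsStrictEpi f) (h : M ⟶ B) (z : F.obj Z) (y : F.obj B)
    (hfib : ∀ w, F.map f w = z → F.map h w = y) : ∃ k : Z ⟶ B, f ≫ k = h := by
  obtain ⟨k, hk, -⟩ := hf h fun s t hst => by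
    obtain ⟨v, hv⟩ := hsurj (s ≫ f) z
    have hs : F.map f (F.map s v) = z := by rw [← F.map_comp_apply, hv]
    have ht : F.map f (F.map t v) = z := by rw [← F.map_comp_apply, ← hst, hv]
    exact hom_ext_of_map_eq F v (by rw [F.map_comp_apply, F.map_comp_apply, hfib _ hs, hfib _ ht])
  exact ⟨k, hk⟩

lemma dle_of_total_left [Quiver.IsThin F.Elements] [IsCofilteredOrEmpty F.Elements]
    (h1 : ∀ {X Y : C} (f : X ⟶ Y), IsStrictEpi f)
    (hsurj : ∀ {X Y : C} (f : X ⟶ Y), Function.Surjective (F.map f))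
    {X : C} (z : F.obj X) {b c : Σ X : C, F.obj X × F.obj X}
    (H : ∀ (x : F.obj X) c', dle F c' c → dle F c' ⟨X, (x, z)⟩ → dle F c' b) : dle F c b := by
  obtain ⟨Z, z₀, z₁⟩ := c
  obtain ⟨⟨M, m⟩, ⟨f, hf⟩, ⟨g, hg⟩, -⟩ :=
    IsCofilteredOrEmpty.cone_objs (F.elementsMk Z z₁) (F.elementsMk X z)
  change F.map f m = z₁ at hf
  change F.map g m = z at hg
  have lift : ∀ w, F.map f w = z₀ → ∃ h : M ⟶ b.1, F.map h w = b.2.1 ∧ F.map h m = b.2.2 :=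
    fun w hw => H (F.map g w) ⟨M, (w, m)⟩ ⟨f, hw, hf⟩ ⟨g, rfl, hg⟩
  obtain ⟨w₀, hw₀⟩ := hsurj f z₀
  obtain ⟨h, hh₀, hh₁⟩ := lift w₀ hw₀
  have hfib : ∀ w, F.map f w = z₀ → F.map h w = b.2.1 := by
    intro w hw
    obtain ⟨h', hh₀', hh₁'⟩ := lift w hw
    rwa [← hom_ext_of_map_eq F m (hh₁'.trans hh₁.symm)]
  obtain ⟨k, hk⟩ := exists_comp_eq_of_map_eq_on_fiber hsurj (h1 f) h z₀ b.2.1 hfib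
  refine ⟨k, ?_, ?_⟩
  · change F.map k z₀ = b.2.1
    rw [← hw₀, ← F.map_comp_apply, hk, hh₀]
  · change F.map k z₁ = b.2.2
    rw [← hf, ← F.map_comp_apply, hk, hh₁]

lemma dle_of_total_right [Quiver.IsThin F.Elements] [IsCofilteredOrEmpty F.Elements]
    (h1 : ∀ {X Y : C} (f : X ⟶ Y), IsStrictEpi f)
    (hsurj : ∀ {X Y : C} (f : X ⟶ Y), Function.Surjective (F.map f))
    {X : C} (z : F.obj X) {b c : Σ X : C, F.obj X × F.obj X}
    (H : ∀ (x : F.obj X) c', dle F c' c → dle F c' ⟨X, (z, x)⟩ → dle F c' b) : dle F c b :=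
  (dle_swap_iff F).1 <| dle_of_total_left h1 hsurj z fun x c' hc' hx =>
    (dle_swap_iff F (a := ⟨c'.1, c'.2.swap⟩)).2 <|
      H x _ ((dle_swap_iff F (b := c)).1 hc') ((dle_swap_iff F).1 hx)

lemma dle_of_gcov [Quiver.IsThin F.Elements] [IsCofilteredOrEmpty F.Elements]
    (h1 : ∀ {X Y : C} (f : X ⟶ Y), IsStrictEpi f)
    (hsurj : ∀ {X Y : C} (f : X ⟶ Y), Function.Surjective (F.map f))
    {u : Finset (Σ X : C, F.obj X × F.obj X)} {S : Set (Finset (Σ X : C, F.obj X × F.obj X))}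
    (hcov : GCov F u S) {b c : Σ X : C, F.obj X × F.obj X} (hc : ∀ a ∈ u, dle F c a)
    (hS : ∀ B ∈ S, ∀ c', dle F c' c → (∀ a ∈ B, dle F c' a) → dle F c' b) : dle F c b := by
  induction hcov generalizing c with
  | empty_left X x y z hxy =>
    obtain ⟨f, hf, hfz⟩ := hc ⟨X, (x, z)⟩ (by simp)
    obtain ⟨g, hg, hgz⟩ := hc ⟨X, (y, z)⟩ (by simp)
    cases hom_ext_of_map_eq F c.2.2 (hfz.trans hgz.symm)
    exact absurd (hf.symm.trans hg) hxy
  | empty_right X x y z hxy =>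
    obtain ⟨f, hfz, hf⟩ := hc ⟨X, (z, x)⟩ (by simp)
    obtain ⟨g, hgz, hg⟩ := hc ⟨X, (z, y)⟩ (by simp)
    cases hom_ext_of_map_eq F c.2.1 (hfz.trans hgz.symm)
    exact absurd (hf.symm.trans hg) hxy
  | total_left X z =>
    exact dle_of_total_left h1 hsurj z fun x c' hc' hx =>
      hS _ ⟨x, rfl⟩ c' hc' (by simpa using hx)
  | total_right X z =>
    exact dle_of_total_right h1 hsurj z fun x c' hc' hx =>
      hS _ ⟨x, rfl⟩ c' hc' (by simpa using hx)
  | iso u v huv _ =>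
    refine hS v rfl c (dle_refl F c) fun a ha => ?_
    obtain ⟨a', ha', ha'a⟩ := huv a ha
    exact dle_trans F (hc a' ha') ha'a
  | pull u S _ w hwu ih =>
    refine ih (fun a ha => ?_) fun B hB c' hc' hc'B => hS _ ⟨B, hB, rfl⟩ c' hc' fun a ha => ?_
    · obtain ⟨a', ha', ha'a⟩ := hwu a ha
      exact dle_trans F (hc a' ha') ha'a
    · rcases Finset.mem_union.1 ha with ha | ha
      · exact hc'B a ha
      · exact dle_trans F hc' (hc a ha)
  | trans u S _ T _ ih ihT =>
    exact ih hc fun B hB c' hc' hc'B => ihT B hB hc'B fun t ht c'' hc'' hc''t =>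
      hS t ⟨B, hB, ht⟩ c'' (dle_trans F hc'' hc') hc''t

lemma dle_of_gcov_of_lle [Quiver.IsThin F.Elements] [IsCofilteredOrEmpty F.Elements]
    (h1 : ∀ {X Y : C} (f : X ⟶ Y), IsStrictEpi f)
    (hsurj : ∀ {X Y : C} (f : X ⟶ Y), Function.Surjective (F.map f))
    {a b : Σ X : C, F.obj X × F.obj X} {S : Set (Finset (Σ X : C, F.obj X × F.obj X))}
    (hcov : GCov F {a} S) (hS : ∀ B ∈ S, lle F B {b}) : dle F a b :=
  dle_of_gcov h1 hsurj hcov (by simpa using dle_refl F a) fun B hB c' _ hc'B => by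
    obtain ⟨a', ha', ha'b⟩ := hS B hB b (Finset.mem_singleton_self b)
    exact dle_trans F (hc'B a' ha') ha'b

end Galois

theorem stmt19_general (F : C ⥤ Type v)
    (h1 : ∀ {X Y : C} (f : X ⟶ Y), IsStrictEpi f)
    (hpro : IsCofiltered F.Elements)
    (hposet : ∀ (a b : F.Elements) (u' v' : a ⟶ b), u' = v')
    (h3 : ∀ {X Y : C} (f : X ⟶ Y), IsStrictEpi f →
      IsStrictEpi (C := Type v) (X := F.obj X) (Y := F.obj Y) (F.map f)) :
    (∀ (X Y : C) (x₀ x₁ : F.obj X) (y₀ y₁ : F.obj Y),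
      (∃ S, GCov F {⟨X, (x₀, x₁)⟩} S ∧ ∀ B ∈ S, lle F B {⟨Y, (y₀, y₁)⟩}) →
      dle F ⟨X, (x₀, x₁)⟩ ⟨Y, (y₀, y₁)⟩) ∧
    (∀ (X Y : C) (x : F.obj X) (y : F.obj Y),
      (∃ S, GCov F {⟨X, (x, x)⟩} S ∧ ∀ B ∈ S, lle F B {⟨Y, (y, y)⟩}) →
      ∃! f : X ⟶ Y, F.map f x = y) := by
  have : Quiver.IsThin F.Elements := fun a b => ⟨hposet a b⟩
  have hsurj : ∀ {X Y : C} (f : X ⟶ Y), Function.Surjective (F.map f) :=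
    map_surjective_of_isStrictEpi F h1 h3
  refine ⟨fun X Y x₀ x₁ y₀ y₁ ⟨S, hcov, hS⟩ => dle_of_gcov_of_lle h1 hsurj hcov hS,
    fun X Y x y ⟨S, hcov, hS⟩ => ?_⟩
  obtain ⟨f, hf, -⟩ := dle_of_gcov_of_lle h1 hsurj hcov hS
  exact ⟨f, hf, fun g hg => hom_ext_of_map_eq F x (hg.trans hf.symm)⟩

/-- Galois theorem of localic Galois theory: if some cover of the generator
`[(X,⟨x₀|x₁⟩)]` has every member below `[(Y,⟨y₀|y₁⟩)]` (i.e. the sheafified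
generators satisfy `#[(X,⟨x₀|x₁⟩)] ≤ #[(Y,⟨y₀|y₁⟩)]` in `lAut(F)`), then already
`[(X,⟨x₀|x₁⟩)] ≤ [(Y,⟨y₀|y₁⟩)]` in `D_{ΔF}`: sheafification is full on `D_{ΔF}`.
Consequently (Lifting Lemma): if `lFix(x) ≤ lFix(y)` in `lAut(F)` then there is a
unique `f : X ⟶ Y` with `F(f)(x) = y`. -/
theorem stmt19 (F : C ⥤ Type v)
    (h1 : ∀ {X Y : C} (f : X ⟶ Y), IsStrictEpi f)
    (h2 : ∀ X : C, Nonempty (F.obj X))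
    (hpro : IsCofiltered F.Elements)
    (hposet : ∀ (a b : F.Elements) (u' v' : a ⟶ b), u' = v')
    (h3 : ∀ {X Y : C} (f : X ⟶ Y), IsStrictEpi f →
      IsStrictEpi (C := Type v) (X := F.obj X) (Y := F.obj Y) (F.map f)) :
    (∀ (X Y : C) (x₀ x₁ : F.obj X) (y₀ y₁ : F.obj Y),
      (∃ S, GCov F {⟨X, (x₀, x₁)⟩} S ∧ ∀ B ∈ S, lle F B {⟨Y, (y₀, y₁)⟩}) →
      dle F ⟨X, (x₀, x₁)⟩ ⟨Y, (y₀, y₁)⟩) ∧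
    (∀ (X Y : C) (x : F.obj X) (y : F.obj Y),
      (∃ S, GCov F {⟨X, (x, x)⟩} S ∧ ∀ B ∈ S, lle F B {⟨Y, (y, y)⟩}) →
      ∃! f : X ⟶ Y, F.map f x = y) :=
  stmt19_general F h1 hpro hposet h3
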